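/- Let α_2, α_r > 0 and let H be a {1,2,r}-graph such that both the order of its maximum complete {1,2,r}-subgraph and the number of vertices covered by H^2 equal t, where t ≥ α_r/(α_2 (r-2)!) + 1. Then max over the standard simplex of L(H,x) = Σ_{i ∈ E(H^1)} x_i + α_2 Σ_{ij ∈ E(H^2)} x_i x_j + α_r Σ_{e ∈ E(H^r)} Π_{i∈e} x_i equals 1 + α_2 (t-1)/(2t) + α_r Π_{i=1}^{r-1}(t-i)/(r! t^{r-1}). -/

import Mathlib

/-!
Let `W` be a complete `{1,2,r}`-subgraph of order `t` and `s = ∑_{i ∈ W} x_i`. Since `H²` covers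
only `t` vertices, `H²` consists exactly of the pairs of `W`, so by Maclaurin's inequality the
2-edges contribute at most `(t-1)s²/(2t)`. Splitting every `r`-set into its parts inside and
outside `W` and applying Maclaurin's inequality to both parts gives
`r! e_r(x) ≤ ∑_k C(r,k) (t)_k/t^k s^k (1-s)^(r-k)` with `(t)_k = t(t-1)⋯(t-k+1)`, the mean of
`(t)_k/t^k` over `k ~ Bin(r, s)`. As `(t)_k/t^k` drops by at most `k/t` from `k` to `k + 1` and
the binomial mean of `C(k,2)` is `C(r,2) s²`, this is at most `(t)_r/t^r + C(r,2)(1-s²)/t`.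
So moving the weight `1 - s` off `W` gains at most `α_r (1-s²)/(2 (r-2)! t)` on the `r`-edges
and loses `α_2 (t-1)(1-s²)/(2t)` on the 2-edges; the hypothesis on `t` says exactly that this
never pays, and the uniform weighting of `W` attains the bound.
-/

open Finset

def stdSimplex' (n : ℕ) : Set (Fin n → ℝ) :=
  {x | (∀ i, 0 ≤ x i) ∧ ∑ i, x i = 1}

open scoped Nat

lemma add_one_mul_mul_pow_le (j : ℕ) {a c : ℝ} (ha : 0 ≤ a) (hc : 0 ≤ c) :
    (j + 1) * a * c ^ j ≤ a ^ (j + 1) + j * c ^ (j + 1) := by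
  rcases hc.eq_or_lt with rfl | hc
  · cases j <;> simp [ha]
  · have bernoulli :=
      one_add_mul_le_pow (a := a / c - 1) (by linarith [div_nonneg ha hc.le]) (j + 1)
    have hscale : (1 + ((j + 1 : ℕ) : ℝ) * (a / c - 1)) * c ^ (j + 1)
        = (j + 1) * a * c ^ j - j * c ^ (j + 1) := by
      field_simp
      push_cast
      ring
    rw [add_sub_cancel, div_pow, le_div_iff₀ (by positivity), hscale] at bernoulli
    linarith

theorem Nat.cast_descFactorial_eq_prod_range (n k : ℕ) :
    (n.descFactorial k : ℝ) = ∏ i ∈ range k, ((n : ℝ) - i) := by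
  rw [← descPochhammer_eval_eq_descFactorial ℝ, descPochhammer_eval_eq_prod_range]

theorem Nat.cast_descFactorial_succ (n k : ℕ) :
    (n.descFactorial (k + 1) : ℝ) = (n - k) * n.descFactorial k := by
  rw [Nat.cast_descFactorial_eq_prod_range, Nat.cast_descFactorial_eq_prod_range,
    prod_range_succ, mul_comm]

lemma prod_Icc_sub_div_eq_choose_div_pow {t : ℕ} (ht : 0 < t) {r : ℕ} (hr : 1 ≤ r) :
    (∏ i ∈ Icc 1 (r - 1), ((t : ℝ) - i)) / (r ! * (t : ℝ) ^ (r - 1)) = t.choose r / t ^ r := by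
  obtain ⟨q, rfl⟩ := Nat.exists_eq_add_of_le' hr
  have hprod : (t : ℝ) * ∏ i ∈ Icc 1 q, ((t : ℝ) - i) = (q + 1)! * t.choose (q + 1) := by
    rw [← Nat.cast_mul, ← Nat.descFactorial_eq_factorial_mul_choose,
      Nat.cast_descFactorial_eq_prod_range, prod_range_succ', ← Ico_add_one_right_eq_Icc,
      prod_Ico_eq_prod_range, Nat.add_sub_cancel]
    push_cast
    ring_nf
  rw [Nat.add_sub_cancel, div_eq_div_iff (by positivity) (by positivity), pow_succ]
  linear_combination (t : ℝ) ^ q * hprod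

lemma maclaurin_induction_step (m j : ℕ) {μ a : ℝ} (hμ : 0 ≤ μ) (ha : 0 ≤ a) :
    (m - j) * m.descFactorial j * μ ^ (j + 1) + (j + 1) * a * (m.descFactorial j * μ ^ j)
      ≤ (m + 1) * m.descFactorial j * ((m * μ + a) / (m + 1)) ^ (j + 1) := by
  set ν := (m * μ + a) / (m + 1)
  have hν : 0 ≤ ν := by positivity
  have ha_eq : a = (m + 1) * ν - m * μ := by
    simp only [ν]
    field_simp
    ring
  calc (m - j) * m.descFactorial j * μ ^ (j + 1) + (j + 1) * a * (m.descFactorial j * μ ^ j)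
      = (m + 1) * m.descFactorial j * ((j + 1) * ν * μ ^ j - j * μ ^ (j + 1)) := by
        rw [ha_eq]
        ring
    _ ≤ (m + 1) * m.descFactorial j * ν ^ (j + 1) := by
        refine mul_le_mul_of_nonneg_left ?_ (by positivity)
        linarith [add_one_mul_mul_pow_le j hν hμ]

lemma descFactorial_div_pow_le_one (t k : ℕ) : (t.descFactorial k : ℝ) / t ^ k ≤ 1 := by
  rcases Nat.eq_zero_or_pos t with rfl | ht
  · cases k <;> simp
  · exact div_le_one_of_le₀ (by exact_mod_cast Nat.descFactorial_le_pow t k) (by positivity)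

lemma descFactorial_div_pow_sub_le {t : ℕ} (ht : 0 < t) {k r : ℕ} (hkr : k ≤ r) :
    (t.descFactorial k : ℝ) / t ^ k - t.descFactorial r / t ^ r
      ≤ ((r.choose 2 : ℝ) - k.choose 2) / t := by
  induction r, hkr using Nat.le_induction with
  | base => simp
  | succ m _ ih =>
    have hstep : (t.descFactorial m : ℝ) / t ^ m - t.descFactorial (m + 1) / t ^ (m + 1)
        = t.descFactorial m / t ^ m * m / t := by
      rw [Nat.cast_descFactorial_succ, pow_succ]
      field_simp
      ring
    have hchoose : ((m + 1).choose 2 : ℝ) = m.choose 2 + m := by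
      rw [Nat.choose_succ_succ, Nat.choose_one_right, Nat.cast_add, add_comm]
    have hle : (t.descFactorial m : ℝ) / t ^ m * m / t ≤ m / t := by
      gcongr
      exact mul_le_of_le_one_left (Nat.cast_nonneg m) (descFactorial_div_pow_le_one t m)
    rw [hchoose, add_sub_right_comm, add_div]
    linarith

theorem sum_choose_mul_choose_mul_pow_mul_pow (r j : ℕ) (s u : ℝ) :
    ∑ k ∈ range (r + 1), (k.choose j : ℝ) * r.choose k * s ^ k * u ^ (r - k)
      = r.choose j * s ^ j * (s + u) ^ (r - j) := by
  rcases lt_or_ge r j with hrj | hjr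
  · rw [Nat.choose_eq_zero_of_lt hrj, Nat.cast_zero, zero_mul, zero_mul]
    refine sum_eq_zero fun k hk => ?_
    rw [Nat.choose_eq_zero_of_lt ((mem_range_succ_iff.1 hk).trans_lt hrj)]
    simp
  · obtain ⟨n, rfl⟩ := Nat.exists_eq_add_of_le hjr
    rw [show j + n + 1 = j + (n + 1) by ring, sum_range_add, Nat.add_sub_cancel_left, add_pow,
      mul_sum]
    have hlow : ∀ k ∈ range j,
        (k.choose j : ℝ) * (j + n).choose k * s ^ k * u ^ (j + n - k) = 0 :=
      fun k hk => by rw [Nat.choose_eq_zero_of_lt (mem_range.1 hk)]; simp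
    rw [sum_eq_zero hlow, zero_add]
    refine sum_congr rfl fun i hi => ?_
    have hcm : ((j + n).choose (j + i) : ℝ) * (j + i).choose j
        = (j + n).choose j * n.choose i := by
      exact_mod_cast (by simpa using Nat.choose_mul (n := j + n) (k := j + i) (s := j) (by omega))
    rw [show j + n - (j + i) = n - i by omega, pow_add]
    linear_combination s ^ j * s ^ i * u ^ (n - i) * hcm

theorem sum_choose_mul_descFactorial_div_pow_le {t : ℕ} (ht : 0 < t) (r : ℕ) {s u : ℝ}
    (hs : 0 ≤ s) (hu : 0 ≤ u) (hsu : s + u = 1) :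
    ∑ k ∈ range (r + 1), (r.choose k : ℝ) * (t.descFactorial k / t ^ k) * s ^ k * u ^ (r - k)
      ≤ t.descFactorial r / t ^ r + r.choose 2 * (1 - s ^ 2) / t := by
  set D : ℕ → ℝ := fun k => t.descFactorial k / t ^ k
  have hmass := sum_choose_mul_choose_mul_pow_mul_pow r 0 s u
  have hmoment := sum_choose_mul_choose_mul_pow_mul_pow r 2 s u
  simp only [Nat.choose_zero_right, Nat.cast_one, one_mul, pow_zero, Nat.sub_zero, hsu,
    one_pow, mul_one] at hmass hmoment
  calc ∑ k ∈ range (r + 1), (r.choose k : ℝ) * D k * s ^ k * u ^ (r - k)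
      ≤ ∑ k ∈ range (r + 1), (r.choose k : ℝ) * (D r + ((r.choose 2 : ℝ) - k.choose 2) / t)
          * s ^ k * u ^ (r - k) := by
        refine sum_le_sum fun k hk => ?_
        have := descFactorial_div_pow_sub_le ht (mem_range_succ_iff.1 hk)
        gcongr
        linarith
    _ = (D r + r.choose 2 / t) * ∑ k ∈ range (r + 1), (r.choose k : ℝ) * s ^ k * u ^ (r - k)
          - 1 / t * ∑ k ∈ range (r + 1), (k.choose 2 : ℝ) * r.choose k * s ^ k * u ^ (r - k) := by
        rw [mul_sum, mul_sum, ← sum_sub_distrib]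
        exact sum_congr rfl fun k _ => by ring
    _ = D r + r.choose 2 * (1 - s ^ 2) / t := by
        rw [hmass, hmoment]
        ring

namespace Finset

variable {ι R : Type*} [CommSemiring R]

def esymm (S : Finset ι) (x : ι → R) (k : ℕ) : R :=
  ∑ A ∈ S.powersetCard k, ∏ i ∈ A, x i

@[simp] lemma esymm_zero (S : Finset ι) (x : ι → R) : S.esymm x 0 = 1 := by
  simp [esymm]

@[simp] lemma esymm_empty_succ (x : ι → R) (k : ℕ) : (∅ : Finset ι).esymm x (k + 1) = 0 := by
  rw [esymm, powersetCard_eq_empty.2 (by simp), sum_empty]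

lemma esymm_nonneg {S : Finset ι} {x : ι → ℝ} (hx : ∀ i ∈ S, 0 ≤ x i) (k : ℕ) :
    0 ≤ S.esymm x k :=
  sum_nonneg fun _ hA => prod_nonneg fun i hi => hx i ((mem_powersetCard.1 hA).1 hi)

variable [DecidableEq ι]

lemma esymm_insert_succ (x : ι → R) {a : ι} {S : Finset ι} (ha : a ∉ S) (k : ℕ) :
    (insert a S).esymm x (k + 1) = S.esymm x (k + 1) + x a * S.esymm x k := by
  have hnot : ∀ B ∈ S.powersetCard k, a ∉ B := fun B hB h => ha ((mem_powersetCard.1 hB).1 h)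
  rw [esymm, powersetCard_succ_insert ha, sum_union, sum_image, esymm, esymm, mul_sum]
  · exact congrArg _ (sum_congr rfl fun B hB => prod_insert (hnot B hB))
  · intro B hB B' hB' h
    rw [← erase_insert (hnot B hB), ← erase_insert (hnot B' hB'), h]
  · refine disjoint_left.2 fun A hA hA' => ?_
    obtain ⟨B, -, rfl⟩ := mem_image.1 hA'
    exact ha ((mem_powersetCard.1 hA).1 (mem_insert_self a B))

theorem esymm_union (x : ι → R) {S T : Finset ι} (h : Disjoint S T) (r : ℕ) :
    (S ∪ T).esymm x r = ∑ k ∈ range (r + 1), S.esymm x k * T.esymm x (r - k) := by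
  have hmaps : ∀ A ∈ (S ∪ T).powersetCard r, #(A ∩ S) ∈ range (r + 1) := fun A hA =>
    mem_range_succ_iff.2 ((card_le_card inter_subset_left).trans (mem_powersetCard.1 hA).2.le)
  rw [esymm, ← sum_fiberwise_of_maps_to hmaps]
  refine sum_congr rfl fun k hk => ?_
  rw [esymm, esymm, sum_mul_sum, ← sum_product']
  have hk : k ≤ r := mem_range_succ_iff.1 hk
  have hsplit : ∀ A ⊆ S ∪ T, A ∩ S ∪ A ∩ T = A := fun A hA => by
    rw [← inter_union_distrib_left, inter_eq_left.2 hA]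
  have hdisj : ∀ A : Finset ι, Disjoint (A ∩ S) (A ∩ T) := fun A =>
    h.mono inter_subset_right inter_subset_right
  have hpart : ∀ B ⊆ S, ∀ C ⊆ T, (B ∪ C) ∩ S = B ∧ (B ∪ C) ∩ T = C := fun B hB C hC => by
    constructor <;> ext i <;> simp only [mem_inter, mem_union] <;> grind [disjoint_left.1 h]
  refine sum_nbij' (fun A => (A ∩ S, A ∩ T)) (fun p => p.1 ∪ p.2) ?_ ?_ ?_ ?_ ?_
  · intro A hA
    simp only [mem_filter, mem_powersetCard] at hA
    obtain ⟨⟨hAST, hAr⟩, hAk⟩ := hA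
    have hcard := card_union_of_disjoint (hdisj A)
    rw [hsplit A hAST] at hcard
    simp only [mem_product, mem_powersetCard]
    exact ⟨⟨inter_subset_right, hAk⟩, inter_subset_right, by omega⟩
  · rintro ⟨B, C⟩ hBC
    simp only [mem_product, mem_powersetCard] at hBC
    obtain ⟨⟨hBS, hBk⟩, hCT, hCr⟩ := hBC
    simp only [mem_filter, mem_powersetCard, (hpart B hBS C hCT).1,
      card_union_of_disjoint (h.mono hBS hCT)]
    exact ⟨⟨union_subset_union hBS hCT, by omega⟩, hBk⟩
  · intro A hA
    exact hsplit A (mem_powersetCard.1 (mem_filter.1 hA).1).1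
  · rintro ⟨B, C⟩ hBC
    simp only [mem_product, mem_powersetCard] at hBC
    obtain ⟨hBC1, hBC2⟩ := hpart B hBC.1.1 C hBC.2.1
    simp only [hBC1, hBC2]
  · intro A hA
    rw [← prod_union (hdisj A), hsplit A (mem_powersetCard.1 (mem_filter.1 hA).1).1]

variable (x : ι → ℝ)

theorem factorial_mul_esymm_le_descFactorial_mul_pow (S : Finset ι) (hx : ∀ i ∈ S, 0 ≤ x i)
    (k : ℕ) : k ! * S.esymm x k ≤ (#S).descFactorial k * ((∑ i ∈ S, x i) / #S) ^ k := by
  induction S using Finset.induction_on generalizing k with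
  | empty => cases k <;> simp
  | @insert a S ha ih =>
    cases k with
    | zero => simp
    | succ j =>
    have hxa : 0 ≤ x a := hx a (mem_insert_self a S)
    have hxS : ∀ i ∈ S, 0 ≤ x i := fun i hi => hx i (mem_insert_of_mem hi)
    have hE1 := ih hxS (j + 1)
    have hE0 := ih hxS j
    rw [Nat.cast_descFactorial_succ] at hE1
    have hmean : (#S : ℝ) * ((∑ i ∈ S, x i) / #S) = ∑ i ∈ S, x i := by
      rcases S.eq_empty_or_nonempty with rfl | hS
      · simp
      · exact mul_div_cancel₀ _ (by simpa using hS.ne_empty)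
    rw [esymm_insert_succ x ha, card_insert_of_notMem ha, sum_insert ha,
      Nat.succ_descFactorial_succ, add_comm (x a), ← hmean]
    push_cast
    calc ((j + 1)! : ℝ) * (S.esymm x (j + 1) + x a * S.esymm x j)
        = (j + 1)! * S.esymm x (j + 1) + (j + 1) * x a * (j ! * S.esymm x j) := by
          rw [Nat.factorial_succ]
          push_cast
          ring
      _ ≤ (#S - j) * (#S).descFactorial j * ((∑ i ∈ S, x i) / #S) ^ (j + 1)
            + (j + 1) * x a * ((#S).descFactorial j * ((∑ i ∈ S, x i) / #S) ^ j) := by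
          gcongr
      _ ≤ _ := maclaurin_induction_step _ j (div_nonneg (sum_nonneg hxS) (Nat.cast_nonneg _)) hxa

theorem factorial_mul_esymm_le_pow (S : Finset ι) (hx : ∀ i ∈ S, 0 ≤ x i) (k : ℕ) :
    k ! * S.esymm x k ≤ (∑ i ∈ S, x i) ^ k := by
  rcases S.eq_empty_or_nonempty with rfl | hS
  · cases k <;> simp
  have := sum_nonneg hx
  calc k ! * S.esymm x k ≤ (#S).descFactorial k * ((∑ i ∈ S, x i) / #S) ^ k :=
        factorial_mul_esymm_le_descFactorial_mul_pow x S hx k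
    _ ≤ (#S : ℝ) ^ k * ((∑ i ∈ S, x i) / #S) ^ k := by
        gcongr
        exact_mod_cast Nat.descFactorial_le_pow _ _
    _ = (∑ i ∈ S, x i) ^ k := by
        rw [← mul_pow, mul_div_cancel₀ _ (by simpa using hS.ne_empty)]

theorem esymm_two_le (S : Finset ι) (hx : ∀ i ∈ S, 0 ≤ x i) :
    S.esymm x 2 ≤ (#S - 1) / (2 * #S) * (∑ i ∈ S, x i) ^ 2 := by
  rcases S.eq_empty_or_nonempty with rfl | hS
  · simp [esymm, powersetCard_eq_empty.2 (by simp : #(∅ : Finset ι) < 2)]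
  have hm : (0 : ℝ) < #S := by simpa using hS.card_pos
  have h := factorial_mul_esymm_le_descFactorial_mul_pow x S hx 2
  have hrhs : (#S : ℝ) * (#S - 1) * ((∑ i ∈ S, x i) / #S) ^ 2
      = 2 * ((#S - 1) / (2 * #S) * (∑ i ∈ S, x i) ^ 2) := by
    field_simp
  rw [Nat.cast_descFactorial_two, hrhs, Nat.factorial_two, Nat.cast_two] at h
  linarith

variable {x}

theorem factorial_mul_esymm_univ_le [Fintype ι] (hx0 : ∀ i, 0 ≤ x i) (hx1 : ∑ i, x i = 1)
    {W : Finset ι} {t : ℕ} (hWt : #W = t) (ht : 0 < t) (r : ℕ) :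
    r ! * (univ : Finset ι).esymm x r
      ≤ t.descFactorial r / t ^ r + r.choose 2 * (1 - (∑ i ∈ W, x i) ^ 2) / t := by
  have hs : 0 ≤ ∑ i ∈ W, x i := sum_nonneg fun i _ => hx0 i
  have hu : 0 ≤ ∑ i ∈ Wᶜ, x i := sum_nonneg fun i _ => hx0 i
  have hsu : ∑ i ∈ W, x i + ∑ i ∈ Wᶜ, x i = 1 := by rw [sum_add_sum_compl, hx1]
  refine le_trans ?_ (sum_choose_mul_descFactorial_div_pow_le ht r hs hu hsu)
  rw [← union_compl W, esymm_union x disjoint_compl_right, mul_sum]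
  refine sum_le_sum fun k hk => ?_
  have hW := factorial_mul_esymm_le_descFactorial_mul_pow x W (fun i _ => hx0 i) k
  have hWc := factorial_mul_esymm_le_pow x Wᶜ (fun i _ => hx0 i) (r - k)
  rw [hWt] at hW
  have hfac : (r ! : ℝ) = r.choose k * k ! * (r - k)! := by
    exact_mod_cast (Nat.choose_mul_factorial_mul_factorial (mem_range_succ_iff.1 hk)).symm
  calc (r ! : ℝ) * (W.esymm x k * Wᶜ.esymm x (r - k))
      = r.choose k * (k ! * W.esymm x k) * ((r - k)! * Wᶜ.esymm x (r - k)) := by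
        rw [hfac]
        ring
    _ ≤ r.choose k * (t.descFactorial k * ((∑ i ∈ W, x i) / t) ^ k)
          * (∑ i ∈ Wᶜ, x i) ^ (r - k) := by
        gcongr
        exact mul_nonneg (by positivity) (esymm_nonneg (fun i _ => hx0 i) _)
    _ = _ := by
        rw [div_pow]
        ring

theorem esymm_univ_le [Fintype ι] (hx0 : ∀ i, 0 ≤ x i) (hx1 : ∑ i, x i = 1) {W : Finset ι}
    {t : ℕ} (hWt : #W = t) (ht : 0 < t) {r : ℕ} (hr : 2 ≤ r) :
    (univ : Finset ι).esymm x r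
      ≤ t.choose r / t ^ r + (1 - (∑ i ∈ W, x i) ^ 2) / (2 * (r - 2)! * t) := by
  refine le_of_mul_le_mul_left ((factorial_mul_esymm_univ_le hx0 hx1 hWt ht r).trans_eq ?_)
    (by positivity : (0 : ℝ) < r !)
  have hrfac : (r ! : ℝ) = r.choose 2 * 2 * (r - 2)! := by
    exact_mod_cast (Nat.choose_mul_factorial_mul_factorial hr).symm
  have hdesc : (t.descFactorial r : ℝ) = r ! * t.choose r := by
    exact_mod_cast Nat.descFactorial_eq_factorial_mul_choose t r
  have htR : (0 : ℝ) < t := by exact_mod_cast ht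
  rw [hdesc, hrfac]
  field_simp

end Finset

section Hypergraph

variable {ι : Type*} [DecidableEq ι]

lemma eq_powersetCard_two_of_card_biUnion_le {W : Finset ι} {E : Finset (Finset ι)}
    (hE : ∀ e ∈ E, #e = 2) (hWE : W.powersetCard 2 ⊆ E) (hW : 2 ≤ #W)
    (hcover : #(E.biUnion id) ≤ #W) : E = W.powersetCard 2 := by
  have hWsub : W ⊆ E.biUnion id := by
    simpa [powersetCard_biUnion two_ne_zero hW] using
      biUnion_subset_biUnion_of_subset_left id hWE
  have hWeq := eq_of_subset_of_card_le hWsub hcover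
  refine Subset.antisymm (fun e he => ?_) hWE
  exact mem_powersetCard.2 ⟨hWeq ▸ subset_biUnion_of_mem id he, hE e he⟩

lemma sum_prod_ite_mem_eq_choose_mul_pow {R : Type*} [CommSemiring R] {W : Finset ι}
    {F : Finset (Finset ι)} {k : ℕ} (hF : ∀ e ∈ F, #e = k) (hWF : W.powersetCard k ⊆ F)
    (c : R) : ∑ e ∈ F, ∏ i ∈ e, (if i ∈ W then c else 0) = (#W).choose k * c ^ k := by
  have hfilter : F.filter (· ⊆ W) = W.powersetCard k := by
    ext e
    simp only [mem_filter, mem_powersetCard]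
    exact ⟨fun ⟨he, heW⟩ => ⟨heW, hF e he⟩, fun h => ⟨hWF (mem_powersetCard.2 h), h.1⟩⟩
  rw [← sum_filter_of_ne (p := (· ⊆ W)), hfilter, ← card_powersetCard, ← nsmul_eq_mul,
    ← sum_const]
  · refine sum_congr rfl fun e he => ?_
    obtain ⟨heW, hek⟩ := mem_powersetCard.1 he
    rw [prod_congr rfl fun i hi => if_pos (heW hi), prod_const, hek]
  · intro e _ hne i hi
    by_contra hiW
    exact hne (prod_eq_zero hi (if_neg hiW))

def lagrangian (α2 αr : ℝ) (E1 : Finset ι) (E2 Er : Finset (Finset ι)) (x : ι → ℝ) : ℝ :=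
  (∑ i ∈ E1, x i) + α2 * (∑ e ∈ E2, ∏ i ∈ e, x i) + αr * ∑ e ∈ Er, ∏ i ∈ e, x i

theorem lagrangian_ite_mem {r : ℕ} (α2 αr : ℝ) {W E1 : Finset ι} {E2 Er : Finset (Finset ι)}
    (hWE1 : W ⊆ E1) (hE2 : ∀ e ∈ E2, #e = 2) (hWE2 : W.powersetCard 2 ⊆ E2)
    (hEr : ∀ e ∈ Er, #e = r) (hWEr : W.powersetCard r ⊆ Er) (c : ℝ) :
    lagrangian α2 αr E1 E2 Er (fun i => if i ∈ W then c else 0)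
      = #W * c + α2 * ((#W).choose 2 * c ^ 2) + αr * ((#W).choose r * c ^ r) := by
  rw [lagrangian, sum_ite_mem, inter_eq_right.2 hWE1, sum_const, nsmul_eq_mul,
    sum_prod_ite_mem_eq_choose_mul_pow hE2 hWE2, sum_prod_ite_mem_eq_choose_mul_pow hEr hWEr]

theorem lagrangian_le [Fintype ι] {r t : ℕ} (hr : 2 ≤ r) {α2 αr : ℝ} (hα2 : 0 ≤ α2)
    (hαr : 0 ≤ αr) (hcoef : αr ≤ α2 * (t - 1) * (r - 2)!) {W : Finset ι} (hWt : #W = t)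
    (ht : 0 < t) {E1 : Finset ι} {E2 Er : Finset (Finset ι)} (hE2 : E2 = W.powersetCard 2)
    (hEr : ∀ e ∈ Er, #e = r) {x : ι → ℝ} (hx0 : ∀ i, 0 ≤ x i) (hx1 : ∑ i, x i = 1) :
    lagrangian α2 αr E1 E2 Er x ≤ 1 + α2 * (t.choose 2 / t ^ 2) + αr * (t.choose r / t ^ r) := by
  set s := ∑ i ∈ W, x i
  have hs : 0 ≤ s := sum_nonneg fun i _ => hx0 i
  have hs1 : s ≤ 1 := hx1 ▸ sum_le_univ_sum_of_nonneg hx0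
  have htR : (0 : ℝ) < t := by exact_mod_cast ht
  have hE1 : ∑ i ∈ E1, x i ≤ 1 := hx1 ▸ sum_le_univ_sum_of_nonneg hx0
  have hA : ∑ e ∈ E2, ∏ i ∈ e, x i ≤ (t - 1) / (2 * t) * s ^ 2 := by
    have := esymm_two_le x W fun i _ => hx0 i
    rwa [hWt, esymm, ← hE2] at this
  have hB : ∑ e ∈ Er, ∏ i ∈ e, x i
      ≤ t.choose r / t ^ r + (1 - s ^ 2) / (2 * (r - 2)! * t) := by
    refine le_trans ?_ (esymm_univ_le hx0 hx1 hWt ht hr)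
    exact sum_le_sum_of_subset_of_nonneg
      (fun e he => mem_powersetCard.2 ⟨subset_univ e, hEr e he⟩)
      fun e _ _ => prod_nonneg fun i _ => hx0 i
  have hmix : αr * ((1 - s ^ 2) / (2 * (r - 2)! * t))
      ≤ α2 * ((t - 1) / (2 * t)) * (1 - s ^ 2) := by
    have hX : 0 ≤ (1 - s ^ 2) / (2 * (r - 2)! * t) := by
      have : 0 ≤ 1 - s ^ 2 := by nlinarith
      positivity
    refine (mul_le_mul_of_nonneg_right hcoef hX).trans_eq ?_
    field_simp
  have hC2 : (t.choose 2 : ℝ) / t ^ 2 = (t - 1) / (2 * t) := by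
    rw [Nat.cast_choose_two]
    field_simp
  rw [lagrangian, hC2]
  linarith [mul_le_mul_of_nonneg_left hA hα2, mul_le_mul_of_nonneg_left hB hαr]

end Hypergraph

theorem stmt_8_general (n r t : ℕ) (hr : 3 ≤ r) (α2 αr : ℝ) (hα2 : 0 < α2) (hαr : 0 < αr)
    (E1 : Finset (Fin n)) (E2 Er : Finset (Finset (Fin n)))
    (hE2 : ∀ e ∈ E2, e.card = 2) (hEr : ∀ e ∈ Er, e.card = r)
    (hcl : ∃ W : Finset (Fin n), W.card = t ∧ W ⊆ E1 ∧
      W.powersetCard 2 ⊆ E2 ∧ W.powersetCard r ⊆ Er)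
    (hcover : (E2.biUnion id).card = t)
    (ht : (t : ℝ) ≥ αr / (α2 * Nat.factorial (r - 2)) + 1) :
    IsGreatest {y : ℝ | ∃ x ∈ stdSimplex' n,
        y = (∑ i ∈ E1, x i) + α2 * (∑ e ∈ E2, ∏ i ∈ e, x i)
          + αr * ∑ e ∈ Er, ∏ i ∈ e, x i}
      (1 + α2 * (((t : ℝ) - 1) / (2 * t))
        + αr * (∏ i ∈ Finset.Icc 1 (r - 1), ((t : ℝ) - i)) / (Nat.factorial r * (t : ℝ) ^ (r - 1))) := by
  obtain ⟨W, hWt, hWE1, hWE2, hWEr⟩ := hcl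
  have hratio : 0 < αr / (α2 * (r - 2)!) := by positivity
  have hcoef : αr ≤ α2 * (t - 1) * (r - 2)! := by
    have := (div_le_iff₀ (by positivity)).1 (le_sub_iff_add_le.2 ht)
    linarith
  have ht2 : 2 ≤ t := by
    have : (1 : ℝ) < t := by linarith
    exact_mod_cast this
  have htR : (0 : ℝ) < t := by positivity
  have hE2W :=
    eq_powersetCard_two_of_card_biUnion_le hE2 hWE2 (hWt ▸ ht2) (hcover.trans hWt.symm).le
  have hvalue : 1 + α2 * (((t : ℝ) - 1) / (2 * t))
      + αr * (∏ i ∈ Icc 1 (r - 1), ((t : ℝ) - i)) / (r ! * (t : ℝ) ^ (r - 1))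
      = 1 + α2 * (t.choose 2 / t ^ 2) + αr * (t.choose r / t ^ r) := by
    rw [mul_div_assoc, prod_Icc_sub_div_eq_choose_div_pow (by omega) (by omega),
      Nat.cast_choose_two]
    field_simp
  rw [hvalue]
  refine ⟨⟨fun i => if i ∈ W then (t : ℝ)⁻¹ else 0, ⟨fun i => by positivity, ?_⟩, ?_⟩, ?_⟩
  · rw [sum_ite_mem, univ_inter, sum_const, hWt, nsmul_eq_mul, mul_inv_cancel₀ htR.ne']
  · rw [← lagrangian, lagrangian_ite_mem α2 αr hWE1 hE2 hWE2 hEr hWEr, hWt,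
      mul_inv_cancel₀ htR.ne']
    simp only [div_eq_mul_inv, inv_pow]
  · rintro _ ⟨x, ⟨hx0, hx1⟩, rfl⟩
    exact lagrangian_le (by omega) hα2.le hαr.le hcoef hWt (by omega) hE2W hEr hx0 hx1

/-- Theorem (b): a `{1,2,r}`-graph whose maximum complete `{1,2,r}`-subgraph and whose
set of vertices covered by the 2-edges both have order `t ≥ α_r/(α_2 (r-2)!) + 1`. -/
theorem stmt_8 (n r t : ℕ) (hr : 3 ≤ r) (α2 αr : ℝ) (hα2 : 0 < α2) (hαr : 0 < αr)
    (E1 : Finset (Fin n)) (E2 Er : Finset (Finset (Fin n)))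
    (hE2 : ∀ e ∈ E2, e.card = 2) (hEr : ∀ e ∈ Er, e.card = r)
    (hcl : ∃ W : Finset (Fin n), W.card = t ∧ W ⊆ E1 ∧
      W.powersetCard 2 ⊆ E2 ∧ W.powersetCard r ⊆ Er)
    (hmax : ∀ W : Finset (Fin n), W ⊆ E1 → W.powersetCard 2 ⊆ E2 →
      W.powersetCard r ⊆ Er → W.card ≤ t)
    (hcover : (E2.biUnion id).card = t)
    (ht : (t : ℝ) ≥ αr / (α2 * Nat.factorial (r - 2)) + 1) :
    IsGreatest {y : ℝ | ∃ x ∈ stdSimplex' n,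
        y = (∑ i ∈ E1, x i) + α2 * (∑ e ∈ E2, ∏ i ∈ e, x i)
          + αr * ∑ e ∈ Er, ∏ i ∈ e, x i}
      (1 + α2 * (((t : ℝ) - 1) / (2 * t))
        + αr * (∏ i ∈ Finset.Icc 1 (r - 1), ((t : ℝ) - i)) / (Nat.factorial r * (t : ℝ) ^ (r - 1))) :=
  stmt_8_general n r t hr α2 αr hα2 hαr E1 E2 Er hE2 hEr hcl hcover ht
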